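/- arXiv:2004.07321 — 4 statements merged into one kernel-verified Lean document; each statement's English description precedes it below -/
import Mathlib

section
/- Let M be a directly finite monoid with group of units U. Then Rank(M) = Rank(U) + Rank(M : U), where Rank(M) is the minimal cardinality of a monoid generating set of M, Rank(U) the minimal cardinality of a monoid generating set of the group U, and Rank(M : U) the minimal cardinality of a set W with ⟨U ∪ W⟩ = M. -/
/-!
If `S` generates a submonoid `N` and `W` generates `M` relative to `N`, then `S ∪ W` generates
`M`; this gives `Rank M ≤ Rank N + Rank (M : N)` for any submonoid. Conversely, when `M \ N` is an
ideal (as for the units of a directly finite monoid), a product lies in `N` only if all its factors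
do, so the elements of `N` in a generating set `T` of `M` already generate `N`, while the rest of
`T` generates `M` relative to `N`.
-/

/-- The rank of a monoid: the least cardinality of a monoid generating set. -/
noncomputable def monoidRank (M : Type*) [Monoid M] : Cardinal :=
  ⨅ T : {T : Set M // Submonoid.closure T = ⊤}, Cardinal.mk T.1

/-- The relative rank of a subset `R` in a monoid `M`. -/
noncomputable def relRank (M : Type*) [Monoid M] (R : Set M) : Cardinal :=
  ⨅ W : {W : Set M // Submonoid.closure (R ∪ W) = ⊤}, Cardinal.mk W.1

open Cardinal Submonoid

section Rank

variable {M : Type*} [Monoid M]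

theorem monoidRank_le_mk {T : Set M} (hT : closure T = ⊤) : monoidRank M ≤ #T :=
  ciInf_le' _ (⟨T, hT⟩ : {T : Set M // closure T = ⊤})

variable (M) in
theorem exists_closure_eq_top_mk_eq_monoidRank :
    ∃ T : Set M, closure T = ⊤ ∧ #T = monoidRank M :=
  have : Nonempty {T : Set M // closure T = ⊤} := ⟨⟨Set.univ, Submonoid.closure_univ⟩⟩
  let ⟨T, hT⟩ := ciInf_mem fun T : {T : Set M // closure T = ⊤} ↦ #T.1
  ⟨T.1, T.2, hT⟩

theorem relRank_le_mk {R W : Set M} (hW : closure (R ∪ W) = ⊤) : relRank M R ≤ #W :=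
  ciInf_le' _ (⟨W, hW⟩ : {W : Set M // closure (R ∪ W) = ⊤})

theorem exists_closure_union_eq_top_mk_eq_relRank (R : Set M) :
    ∃ W : Set M, closure (R ∪ W) = ⊤ ∧ #W = relRank M R :=
  have : Nonempty {W : Set M // closure (R ∪ W) = ⊤} :=
    ⟨⟨Set.univ, by rw [Set.union_univ, Submonoid.closure_univ]⟩⟩
  let ⟨W, hW⟩ := ciInf_mem fun W : {W : Set M // closure (R ∪ W) = ⊤} ↦ #W.1
  ⟨W.1, W.2, hW⟩

theorem monoidRank_le_monoidRank_add_relRank (N : Submonoid M) :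
    monoidRank M ≤ monoidRank N + relRank M N := by
  obtain ⟨S, hS, hS_card⟩ := exists_closure_eq_top_mk_eq_monoidRank N
  obtain ⟨W, hW, hW_card⟩ := exists_closure_union_eq_top_mk_eq_relRank (N : Set M)
  have hS_image : closure (Subtype.val '' S) = N := by
    rw [← N.coe_subtype, ← MonoidHom.map_mclosure, hS, ← MonoidHom.mrange_eq_map,
      N.mrange_subtype]
  have hN_le : N ≤ closure (Subtype.val '' S ∪ W) :=
    hS_image.ge.trans (closure_mono Set.subset_union_left)
  have hgen : closure (Subtype.val '' S ∪ W) = ⊤ := top_unique <| hW ▸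
    closure_le.2 (Set.union_subset hN_le (Set.subset_union_right.trans subset_closure))
  calc monoidRank M ≤ #(Subtype.val '' S ∪ W : Set M) := monoidRank_le_mk hgen
    _ ≤ #(Subtype.val '' S) + #W := mk_union_le _ _
    _ = monoidRank N + relRank M N := by
      rw [mk_image_eq Subtype.val_injective, hS_card, hW_card]

theorem closure_preimage_val_eq_top {N : Submonoid M}
    (hN : ∀ a b : M, a * b ∈ N → a ∈ N ∧ b ∈ N) {T : Set M} (hT : closure T = ⊤) :
    closure (Subtype.val ⁻¹' T : Set N) = ⊤ := by
  suffices ∀ x ∈ closure T, ∀ hxN : x ∈ N,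
      ⟨x, hxN⟩ ∈ closure (Subtype.val ⁻¹' T : Set N) from
    eq_top_iff.2 fun x _ ↦ this x (hT ▸ mem_top _) x.2
  intro x hx
  induction hx using closure_induction with
  | mem y hy => exact fun _ ↦ subset_closure hy
  | one => exact fun _ ↦ one_mem _
  | mul a b _ _ iha ihb =>
    intro habN
    obtain ⟨haN, hbN⟩ := hN a b habN
    exact mul_mem (iha haN) (ihb hbN)

theorem monoidRank_add_relRank_le {N : Submonoid M}
    (hN : ∀ a b : M, a * b ∈ N → a ∈ N ∧ b ∈ N) :
    monoidRank N + relRank M N ≤ monoidRank M := by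
  obtain ⟨T, hT, hT_card⟩ := exists_closure_eq_top_mk_eq_monoidRank M
  have hgen : closure ((N : Set M) ∪ (T \ N)) = ⊤ := by
    rw [Set.union_sdiff_self]
    exact top_unique (hT ▸ closure_mono Set.subset_union_right)
  calc monoidRank N + relRank M N
      ≤ #(Subtype.val ⁻¹' T : Set N) + #(T \ N : Set M) :=
        add_le_add (monoidRank_le_mk (closure_preimage_val_eq_top hN hT)) (relRank_le_mk hgen)
    _ = #(T ∩ N : Set M) + #(T \ N : Set M) := by
        rw [Set.inter_comm, ← Subtype.image_preimage_val, mk_image_eq Subtype.val_injective]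
        rfl -- the preimages in `↥N` and in `↥(N : Set M)` agree only up to defeq
    _ = monoidRank M := by
        rw [← mk_union_of_disjoint Set.disjoint_sdiff_inter.symm, Set.inter_union_sdiff, hT_card]

end Rank

theorem rank_eq_rank_units_add_relRank {M : Type*} [Monoid M]
    (hdf : ∀ a b : M, a * b = 1 → b * a = 1) :
    monoidRank M = monoidRank (IsUnit.submonoid M) + relRank M {u : M | IsUnit u} := by
  have : IsDedekindFiniteMonoid M := ⟨hdf _ _⟩
  exact le_antisymm (monoidRank_le_monoidRank_add_relRank _)
    (monoidRank_add_relRank_le fun _ _ ↦ IsUnit.mul_iff.1)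
end

section
/- Let G be a group and A a finite set. A cellular automaton τ : A^G → A^G has a left inverse in the monoid End(A^G) of cellular automata (there exists a cellular automaton σ with σ ∘ τ = id) if and only if τ is injective. -/
/-- A cellular automaton over `A^G`: a map admitting a finite memory set `S` and a
local rule `μ : A^S → A` with `τ(x)(g) = μ((g⁻¹ · x)|_S)`, where the shift action
is `(g · x)(h) = x(g⁻¹ h)`, so `(g⁻¹ · x)(s) = x (g * s)`. -/
def IsCellularAutomaton {G A : Type*} [Group G] (τ : (G → A) → G → A) : Prop :=
  ∃ S : Set G, S.Finite ∧ ∃ μ : (S → A) → A, ∀ x g, τ x g = μ fun s => x (g * s.1)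

/-!
By shift-equivariance, a cellular-automaton left inverse of `τ` amounts to a local rule reading
`x 1` off finitely many cells of `τ x`. Injectivity says that `τ x` determines `x 1`; since `A^G`
is compact and `τ` continuous, the closed sets of pairs `(x, y)` with `x 1 ≠ y 1` on which `τ x`
and `τ y` agree along a finite window `T` cannot all be nonempty, so some finite window suffices.
-/

open Function

theorem Function.FactorsThrough.exists_finset_of_compactSpace {X ι A B : Type*}
    [TopologicalSpace X] [CompactSpace X] [TopologicalSpace A] [DiscreteTopology A]
    [TopologicalSpace B] [T2Space B] {f : X → ι → B} {φ : X → A} (hf : Continuous f)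
    (hφ : Continuous φ) (h : φ.FactorsThrough f) :
    ∃ T : Finset ι, ∀ x y, (∀ t ∈ T, f x t = f y t) → φ x = φ y := by
  by_contra! H
  set C : Finset ι → Set (X × X) :=
    fun T => {p | (∀ t ∈ T, f p.1 t = f p.2 t) ∧ φ p.1 ≠ φ p.2}
  have hC_antitone : Antitone C := fun T T' hTT' p hp => ⟨fun t ht => hp.1 t (hTT' ht), hp.2⟩
  have hC_closed (T : Finset ι) : IsClosed (C T) := by
    refine .inter ?_ ((isClosed_discrete {q : A × A | q.1 ≠ q.2}).preimage
      (f := fun p : X × X => (φ p.1, φ p.2)) (by fun_prop))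
    show IsClosed {p : X × X | ∀ t ∈ T, f p.1 t = f p.2 t}
    simp only [Set.ofPred_forall]
    exact isClosed_iInter fun t => isClosed_iInter fun _ => isClosed_eq (by fun_prop) (by fun_prop)
  have hC_nonempty (T : Finset ι) : (C T).Nonempty := by
    obtain ⟨x, y, hxy⟩ := H T
    exact ⟨(x, y), hxy⟩
  obtain ⟨p, hp⟩ := IsCompact.nonempty_iInter_of_directed_nonempty_isCompact_isClosed C
    hC_antitone.directed_ge hC_nonempty (fun T => (hC_closed T).isCompact) hC_closed
  rw [Set.mem_iInter] at hp
  have hfp : f p.1 = f p.2 := funext fun t => (hp {t}).1 t (Finset.mem_singleton_self t)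
  exact (hp ∅).2 (h hfp)

namespace IsCellularAutomaton

variable {G A : Type*} [Group G] {τ : (G → A) → G → A}

theorem apply_shift (hτ : IsCellularAutomaton τ) (x : G → A) (g t : G) :
    τ (fun h => x (g * h)) t = τ x (g * t) := by
  obtain ⟨S, -, μ, hμ⟩ := hτ
  simp only [hμ, mul_assoc]

theorem continuous [TopologicalSpace A] [DiscreteTopology A] (hτ : IsCellularAutomaton τ) :
    Continuous τ := by
  obtain ⟨S, hS, μ, hμ⟩ := hτ
  have := hS.to_subtype
  refine continuous_pi fun g => ?_
  simp only [hμ]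
  exact continuous_of_discreteTopology.comp (continuous_pi fun s => continuous_apply _)

theorem exists_leftInverse_of_finset (hτ : IsCellularAutomaton τ) (T : Finset G)
    (hT : ∀ x y, (∀ t ∈ T, τ x t = τ y t) → x 1 = y 1) :
    ∃ σ : (G → A) → G → A, IsCellularAutomaton σ ∧ σ ∘ τ = id := by
  -- `1` joins the memory set only to supply a default value for patterns outside the image.
  set S : Set G := insert 1 ↑T
  have h1S : (1 : G) ∈ S := Set.mem_insert 1 _
  set r : (G → A) → S → A := fun x s => τ x s
  have hr : (fun x : G → A => x 1).FactorsThrough r := fun x y hxy =>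
    hT x y fun t ht => congrFun hxy ⟨t, Set.mem_insert_of_mem 1 ht⟩
  set ν : (S → A) → A := extend r (fun x => x 1) fun p => p ⟨1, h1S⟩
  refine ⟨fun y g => ν fun s => y (g * s),
    ⟨S, T.finite_toSet.insert 1, ν, fun _ _ => rfl⟩, ?_⟩
  funext x g
  have hshift : (fun s : S => τ x (g * s)) = r fun h => x (g * h) :=
    funext fun s => (hτ.apply_shift x g s).symm
  simp only [comp_apply, id_eq, hshift, ν, hr.extend_apply, mul_one]

end IsCellularAutomaton

theorem leftInvertible_iff_injective_CA {G A : Type*} [Group G] [Finite A]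
    (τ : (G → A) → G → A) (hτ : IsCellularAutomaton τ) :
    (∃ σ : (G → A) → G → A, IsCellularAutomaton σ ∧ σ ∘ τ = id) ↔
      Function.Injective τ := by
  refine ⟨fun ⟨σ, _, hστ⟩ => LeftInverse.injective (congrFun hστ), fun hinj => ?_⟩
  let : TopologicalSpace A := ⊥
  have : DiscreteTopology A := ⟨rfl⟩
  obtain ⟨T, hT⟩ :=
    (hinj.factorsThrough _).exists_finset_of_compactSpace hτ.continuous (continuous_apply 1)
  exact hτ.exists_leftInverse_of_finset T hT
end

section
/- The multiplicative group of units of an infinite field is not finitely generated. -/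
/-!
If `Fˣ` is generated by finitely many units, then `F` is generated as a ring by them and their
inverses. Zariski's lemma over the Jacobson ring `ℤ` makes `F` a finite `ℤ`-module, hence integral
over `ℤ`. In characteristic `0` this would force `ℤ` to be a field; in characteristic `p` it makes
`F` a finite-dimensional `𝔽_p`-vector space, so `F` is finite.
-/

theorem isJacobsonRing_of_jacobson_eq_bot {R : Type*} [CommRing R] [Ring.DimensionLEOne R]
    (h : Ring.jacobson R = ⊥) : IsJacobsonRing R := by
  refine isJacobsonRing_iff_prime_eq.mpr fun P hP => ?_
  rcases eq_or_ne P ⊥ with rfl | hP_ne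
  · rw [Ideal.jacobson_bot, h]
  · have : P.IsMaximal := hP.isMaximal hP_ne
    exact Ideal.jacobson_eq_self_of_isMaximal

theorem Int.jacobson_eq_bot : Ring.jacobson ℤ = ⊥ := by
  refine eq_bot_iff.mpr fun x hx => ?_
  rw [← Ideal.jacobson_bot, Ideal.mem_jacobson_bot] at hx
  rcases Int.isUnit_iff.mp (hx x) with h | h
  · exact mul_self_eq_zero.mp (by linarith)
  · nlinarith [mul_self_nonneg x]

instance Int.isJacobsonRing : IsJacobsonRing ℤ :=
  isJacobsonRing_of_jacobson_eq_bot Int.jacobson_eq_bot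

theorem Algebra.FiniteType.of_fg_units (R K : Type*) [CommRing R] [Field K] [Algebra R K]
    [Group.FG Kˣ] : Algebra.FiniteType R K := by
  obtain ⟨S, hS_top, hS_fin⟩ := Group.fg_iff.mp ‹Group.FG Kˣ›
  set T : Set K := (↑) '' (S ∪ S⁻¹)
  have hT_fin : T.Finite := (hS_fin.union hS_fin.inv).image _
  have h_units : ∀ u : Kˣ, (u : K) ∈ Algebra.adjoin R T := by
    intro u
    have hu : u ∈ Submonoid.closure (S ∪ S⁻¹) := by
      rw [← Subgroup.closure_toSubmonoid, hS_top]; trivial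
    have hu' := Submonoid.mem_map_of_mem (Units.coeHom K) hu
    rw [MonoidHom.map_mclosure] at hu'
    exact Submonoid.closure_le.mpr (Algebra.subset_adjoin (R := R)) hu'
  have h_top : Algebra.adjoin R T = ⊤ := by
    refine Algebra.eq_top_iff.mpr fun x => ?_
    rcases eq_or_ne x 0 with rfl | hx
    · exact zero_mem _
    · exact h_units (Units.mk0 x hx)
  exact ⟨Subalgebra.fg_def.mpr ⟨T, hT_fin, h_top⟩⟩

theorem finite_of_module_finite_int (K : Type*) [Field K] [Module.Finite ℤ K] : Finite K := by
  obtain ⟨p, hp⟩ := CharP.exists K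
  rcases CharP.char_is_prime_or_zero K p with hp_prime | rfl
  · have : Fact p.Prime := ⟨hp_prime⟩
    let : Algebra (ZMod p) K := ZMod.algebra K p
    have : Module.Finite (ZMod p) K := Module.Finite.of_restrictScalars_finite ℤ (ZMod p) K
    exact Module.finite_of_finite (ZMod p)
  · have : CharZero K := CharP.charP_to_charZero K
    exact (Int.not_isField (isField_of_isIntegral_of_isField
      (algebraMap ℤ K).injective_int (Field.toIsField K))).elim

theorem units_of_infinite_field_not_fg (F : Type*) [Field F] [Infinite F] :
    ¬ Group.FG Fˣ := by
  intro _
  have : Algebra.FiniteType ℤ F := .of_fg_units ℤ F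
  have : Module.Finite ℤ F := finite_of_finite_type_of_isJacobsonRing ℤ F
  exact not_finite_iff_infinite.mpr ‹Infinite F› (finite_of_module_finite_int F)
end

section
/- Let F be a field of characteristic p ≠ 2 and k ∈ ℕ. The group of units of the group algebra F[ℤ/2^k] requires at least k+1 generators; indeed F[ℤ/2^k] decomposes as a direct sum of at least k+1 field extensions K_i of F, and the direct sum of the cyclic groups K_i* (for F finite) has rank equal to the number of summands, since p−1 divides |K_i*| = p^{r_i}−1 for each i. -/
/-!
Since `2` is invertible in `F`, the polynomial `X ^ 2 ^ k - 1` factors as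
`(X - 1) (X + 1) (X ^ 2 + 1) ⋯ (X ^ 2 ^ (k - 1) + 1)`, and these `k + 1` factors are pairwise
coprime because each one divides the next one minus `2`. By the Chinese remainder theorem,
`F[ℤ/2^k] ≅ F[X] ⧸ (X ^ 2 ^ k - 1)` is a product of `k + 1` nonzero rings of characteristic `p`,
so its unit group contains the `2 ^ (k + 1)` sign vectors `(±1, …, ±1)`, all squaring to `1`.
In a finite abelian group `G` generated by `S`, the kernel of `g ↦ g ^ 2` has the size of
`G ⧸ G²`, a group of exponent `2` generated by the image of `S`, so it has at most `2 ^ |S|`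
elements. Hence `|S| ≥ k + 1`.
-/

open Polynomial

theorem Subgroup.card_le_pow_card_of_closure_eq_top {B : Type*} [CommGroup B] [Finite B] {n : ℕ}
    (hn : 0 < n) (hB : ∀ b : B, b ^ n = 1) {T : Set B} (hT : closure T = ⊤) :
    Nat.card B ≤ n ^ Nat.card T := by
  classical
  obtain ⟨s, rfl⟩ := T.toFinite.exists_finset_coe
  have hsurj : Function.Surjective fun e : s → Fin n => ∏ t : s, (t : B) ^ (e t : ℕ) := by
    intro b
    have hb : b ∈ Submonoid.closure (s : Set B) := by
      rw [← closure_toSubmonoid_of_finite, hT]; trivial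
    obtain ⟨f, -, rfl⟩ := Submonoid.mem_closure_finset.mp hb
    refine ⟨fun t => ⟨f t % n, Nat.mod_lt _ hn⟩, ?_⟩
    rw [← Finset.prod_coe_sort]
    exact Finset.prod_congr rfl fun t _ => (pow_eq_pow_mod _ (hB t)).symm
  calc Nat.card B ≤ Nat.card (s → Fin n) := Nat.card_le_card_of_surjective _ hsurj
    _ = n ^ Nat.card (s : Set B) := by simp

theorem card_ker_powMonoidHom_le {G : Type*} [CommGroup G] [Finite G] {n : ℕ} (hn : 0 < n)
    {S : Set G} (hS : Subgroup.closure S = ⊤) :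
    Nat.card (powMonoidHom n : G →* G).ker ≤ n ^ Nat.card S := by
  set H := (powMonoidHom n : G →* G).range
  have hker : Nat.card (powMonoidHom n : G →* G).ker = H.index := by
    have h1 := (powMonoidHom n : G →* G).ker.card_mul_index
    have h2 := H.card_mul_index
    rw [Subgroup.index_ker] at h1
    exact Nat.eq_of_mul_eq_mul_right Nat.card_pos (by rw [h1, mul_comm, h2])
  have hgen : Subgroup.closure (QuotientGroup.mk' H '' S) = ⊤ := by
    rw [← MonoidHom.map_closure, hS,
      Subgroup.map_top_of_surjective _ (QuotientGroup.mk'_surjective H)]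
  have hexp : ∀ b : G ⧸ H, b ^ n = 1 := by
    rintro ⟨g⟩
    exact (QuotientGroup.eq_one_iff _).mpr ⟨g, rfl⟩
  calc Nat.card (powMonoidHom n : G →* G).ker = Nat.card (G ⧸ H) := hker
    _ ≤ n ^ Nat.card (QuotientGroup.mk' H '' S) :=
      Subgroup.card_le_pow_card_of_closure_eq_top hn hexp hgen
    _ ≤ n ^ Nat.card S := Nat.pow_le_pow_right hn (Nat.card_image_le S.toFinite)

theorem RingEquiv.two_pow_card_le_card_ker_sq {R ι : Type*} [CommRing R] [Finite R] [Fintype ι]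
    {Q : ι → Type*} [∀ i, Ring (Q i)] (e : R ≃+* ∀ i, Q i) (hQ : ∀ i, (-1 : Q i) ≠ 1) :
    2 ^ Fintype.card ι ≤ Nat.card (powMonoidHom 2 : Rˣ →* Rˣ).ker := by
  let φ : (ι → ℤˣ) →* Rˣ :=
    (Units.map ((e.symm : (∀ i, Q i) →+* R).comp
      (RingHom.pi fun i => (Int.castRingHom (Q i)).comp (Pi.evalRingHom _ i)))).comp
      MulEquiv.piUnits.symm.toMonoidHom
  have hφ : Function.Injective φ := by
    refine (injective_iff_map_eq_one φ).mpr fun ε hε => funext fun i => ?_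
    have hi : ((ε i : ℤ) : Q i) = 1 := by
      simpa [φ] using congrFun (congrArg (fun u : Rˣ => e u) hε) i
    rcases Int.units_eq_one_or (ε i) with h | h
    · exact h
    · exact absurd (by simpa [h] using hi) (hQ i)
  have hsq : ∀ ε, φ ε ∈ (powMonoidHom 2 : Rˣ →* Rˣ).ker := fun ε => by
    rw [MonoidHom.mem_ker, powMonoidHom_apply, ← map_pow]
    convert map_one φ
    exact funext fun i => Int.units_sq (ε i)
  calc 2 ^ Fintype.card ι = Nat.card (ι → ℤˣ) := by
        rw [Nat.card_fun, Nat.card_eq_fintype_card (α := ℤˣ), Fintype.card_units_int,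
          Nat.card_eq_fintype_card]
    _ ≤ _ := Nat.card_le_card_of_injective (fun ε => ⟨φ ε, hsq ε⟩)
      fun _ _ h => hφ (congrArg Subtype.val h)

theorem isCoprime_of_dvd_sub_two {A : Type*} [CommRing A] (h2 : IsUnit (2 : A)) {a b : A}
    (h : b ∣ a - 2) : IsCoprime a b := by
  obtain ⟨u, hu⟩ := h2
  obtain ⟨c, hc⟩ := h
  have hu' : (↑u⁻¹ : A) * 2 = 1 := by rw [← hu, u.inv_mul]
  exact ⟨↑u⁻¹, -(↑u⁻¹ * c), by linear_combination (↑u⁻¹ : A) * hc + hu'⟩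

noncomputable def Ideal.quotientSpanProdRingEquivPi {A ι : Type*} [CommRing A] [Fintype ι]
    (f : ι → A) (hf : Pairwise fun i j => IsCoprime (f i) (f j)) :
    A ⧸ span {∏ i, f i} ≃+* ∀ i, A ⧸ span {f i} :=
  (quotEquivOfEq (iInf_span_singleton fun _ _ hij => hf hij).symm).trans
    (quotientInfRingEquivPiQuotient _ fun _ _ hij => (isCoprime_span_singleton_iff _ _).mpr (hf hij))

namespace Polynomial

variable (R : Type*) [CommRing R]

noncomputable def twoPowFactor : ℕ → R[X]
  | 0 => X - 1
  | j + 1 => X ^ 2 ^ j + 1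

theorem prod_range_twoPowFactor (k : ℕ) :
    ∏ j ∈ Finset.range (k + 1), twoPowFactor R j = X ^ 2 ^ k - 1 := by
  induction k with
  | zero => simp [twoPowFactor]
  | succ k ih =>
    rw [Finset.prod_range_succ, ih, twoPowFactor, pow_succ, pow_mul]
    ring

variable {R}

theorem isCoprime_twoPowFactor (h2 : IsUnit (2 : R)) {i j : ℕ} (hij : i < j) :
    IsCoprime (twoPowFactor R i) (twoPowFactor R j) := by
  obtain ⟨j, rfl⟩ := Nat.exists_eq_add_of_lt hij
  refine (isCoprime_of_dvd_sub_two (by rw [← map_ofNat C 2]; exact h2.map C) ?_).symm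
  have hsub : twoPowFactor R (i + j + 1) - 2 =
      ∏ l ∈ Finset.range (i + j + 1), twoPowFactor R l := by
    rw [prod_range_twoPowFactor, twoPowFactor]; ring
  exact hsub ▸ Finset.dvd_prod_of_mem _ (Finset.mem_range.mpr (by omega))

theorem degree_twoPowFactor_ne_zero [Nontrivial R] (j : ℕ) : (twoPowFactor R j).degree ≠ 0 := by
  cases j with
  | zero => rw [twoPowFactor, ← C_1, degree_X_sub_C]; exact one_ne_zero
  | succ j => rw [twoPowFactor, ← C_1, degree_X_pow_add_C (by positivity)]; simp

end Polynomial

theorem AdjoinRoot.neg_one_ne_one_twoPowFactor {F : Type*} [Field F] (p : ℕ) [CharP F p]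
    (hp : p ≠ 2) (j : ℕ) : (-1 : AdjoinRoot (twoPowFactor F j)) ≠ 1 := by
  have : Nontrivial (AdjoinRoot (twoPowFactor F j)) :=
    AdjoinRoot.nontrivial _ (degree_twoPowFactor_ne_zero j)
  have : CharP (AdjoinRoot (twoPowFactor F j)) p :=
    charP_of_injective_algebraMap (algebraMap F _).injective p
  exact Ring.neg_one_ne_one_of_char_ne_two (by rwa [ringChar.eq _ p])

def ZMod.powHom {M : Type*} [Monoid M] {n : ℕ} [NeZero n] (x : M) (hx : x ^ n = 1) :
    Multiplicative (ZMod n) →* M where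
  toFun a := x ^ a.toAdd.val
  map_one' := by simp
  map_mul' a b := by rw [toAdd_mul, ZMod.val_add, ← pow_eq_pow_mod _ hx, pow_add]

@[simp]
theorem ZMod.powHom_apply {M : Type*} [Monoid M] {n : ℕ} [NeZero n] (x : M) (hx : x ^ n = 1)
    (a : Multiplicative (ZMod n)) : ZMod.powHom x hx a = x ^ a.toAdd.val := rfl

theorem AdjoinRoot.root_pow_eq_one {R : Type*} [CommRing R] (n : ℕ) :
    root (X ^ n - 1 : R[X]) ^ n = 1 := by
  have h := aeval_eq (f := (X ^ n - 1 : R[X])) (X ^ n - 1)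
  rwa [mk_self, map_sub, map_pow, aeval_X, map_one, sub_eq_zero] at h

theorem MonoidAlgebra.of_ofAdd_one_pow (R : Type*) [Semiring R] {n : ℕ} (m : ℕ) :
    of R (Multiplicative (ZMod n)) (.ofAdd 1) ^ m = of R _ (.ofAdd m) := by
  rw [← map_pow, ← ofAdd_nsmul, nsmul_one]

noncomputable def MonoidAlgebra.zmodAlgEquivAdjoinRoot (R : Type*) [CommRing R] (n : ℕ)
    [NeZero n] : MonoidAlgebra R (Multiplicative (ZMod n)) ≃ₐ[R] AdjoinRoot (X ^ n - 1 : R[X]) :=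
  AlgEquiv.ofAlgHom
    (lift R _ _ (ZMod.powHom _ (AdjoinRoot.root_pow_eq_one n)))
    (AdjoinRoot.liftAlgHom _ (Algebra.ofId R _) (of R _ (.ofAdd 1)) (by
      rw [eval₂_sub, eval₂_X_pow, eval₂_one, of_ofAdd_one_pow, ZMod.natCast_self, ofAdd_zero,
        map_one, sub_self]))
    (AdjoinRoot.algHom_ext (by
      simp [ZMod.val_one_eq_one_mod, ← pow_eq_pow_mod _ (AdjoinRoot.root_pow_eq_one n)]))
    (algHom_ext (fun a => by simp [← ofAdd_nsmul]) (Subsingleton.elim _ _))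

noncomputable def MonoidAlgebra.zmodTwoPowRingEquivPi {R : Type*} [CommRing R]
    (h2 : IsUnit (2 : R)) (k : ℕ) :
    MonoidAlgebra R (Multiplicative (ZMod (2 ^ k))) ≃+*
      ∀ j : Fin (k + 1), AdjoinRoot (twoPowFactor R j) :=
  have : NeZero (2 ^ k) := ⟨pow_ne_zero _ two_ne_zero⟩
  have hprod : ∏ j : Fin (k + 1), twoPowFactor R j = X ^ 2 ^ k - 1 := by
    rw [Fin.prod_univ_eq_prod_range (twoPowFactor R), prod_range_twoPowFactor]
  (zmodAlgEquivAdjoinRoot R (2 ^ k)).toRingEquiv.trans <|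
    (Ideal.quotEquivOfEq (by rw [hprod])).trans <|
      Ideal.quotientSpanProdRingEquivPi _ fun i j hij => by
        rcases lt_or_gt_of_ne (Fin.val_ne_of_ne hij) with h | h
        · exact isCoprime_twoPowFactor h2 h
        · exact (isCoprime_twoPowFactor h2 h).symm

theorem units_groupAlgebra_zmod_two_pow_rank (F : Type*) [Field F] [Finite F]
    (p : ℕ) [CharP F p] (hp : p ≠ 2) (k : ℕ) :
    ∀ S : Set (MonoidAlgebra F (Multiplicative (ZMod (2 ^ k))))ˣ,
      Subgroup.closure S = ⊤ → (k + 1 : Cardinal) ≤ Cardinal.mk S := by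
  intro S hS
  have : Finite (MonoidAlgebra F (Multiplicative (ZMod (2 ^ k)))) := Module.finite_of_finite F
  have h2 : IsUnit (2 : F) := (Ring.two_ne_zero (by rwa [ringChar.eq F p])).isUnit
  have hcard : 2 ^ (k + 1) ≤ 2 ^ Nat.card S := by
    simpa using ((MonoidAlgebra.zmodTwoPowRingEquivPi h2 k).two_pow_card_le_card_ker_sq
      fun j => AdjoinRoot.neg_one_ne_one_twoPowFactor p hp j).trans
      (card_ker_powMonoidHom_le two_pos hS)
  rw [← Nat.cast_card]
  exact_mod_cast (Nat.pow_le_pow_iff_right one_lt_two).mp hcard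
end
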